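/- arXiv:2104.10250 — 6 statements merged into one kernel-verified Lean document; each statement's English description precedes it below -/
import Mathlib

section
/- Let N ∈ ℕ and let α, β, γ ∈ ℕ be mutually coprime (gcd(α,β) = gcd(α,γ) = gcd(β,γ) = 1). Then G_N(γ, αβ) = G_N(βγ, α) · G_N(αγ, β). -/
open Complex Finset Filter
open scoped Classical

/-- Number of partitions of `n`. -/
noncomputable def partitionCount (n : ℕ) : ℕ := Fintype.card (Nat.Partition n)

/-- `P(x)` for rational `x`: the number of partitions of `x` when `x` is a
nonnegative integer, and `0` otherwise. -/
noncomputable def Pq (x : ℚ) : ℕ :=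
  if h : ∃ m : ℕ, (m : ℚ) = x then partitionCount h.choose else 0

/-- The quadratic form `θ_k(x) = Σ x_i² + Σ_{i<j} x_i x_j` on `ℤ^k`. -/
def thetaInt (k : ℕ) (x : Fin k → ℤ) : ℤ :=
  (∑ i, x i ^ 2) + ∑ i, ∑ j ∈ Finset.Ioi i, x i * x j

/-- `r_k(n)`: the number of `x ∈ ℤ^k` with `θ_k(x) = n`. -/
noncomputable def rTheta (k n : ℕ) : ℕ :=
  Nat.card {x : Fin k → ℤ // thetaInt k x = (n : ℤ)}

/-- `V_r(m)`: the coefficient of `q^m` in `1/(q;q)_∞^r`. -/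
noncomputable def Vpart (r m : ℕ) : ℕ :=
  ∑ x ∈ Finset.Nat.antidiagonalTuple r m, ∏ i, partitionCount (x i)

/-- `cφ_N(n)`, the number of `N`-colored generalized Frobenius partitions of `n`. -/
noncomputable def cphi (N n : ℕ) : ℕ :=
  ∑ p ∈ Finset.HasAntidiagonal.antidiagonal n, rTheta (N - 1) p.1 * Vpart N p.2

/-- The quadratic Gauss sum `G_k(a,c) = Σ_{x ∈ (ℤ/cℤ)^k} e^{2πi a θ_k(x)/c}`,
with the sum taken over the representatives `0,…,c−1` of `ℤ/cℤ`. -/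
noncomputable def GaussG (k : ℕ) (a : ℤ) (c : ℕ) : ℂ :=
  ∑ x : Fin k → Fin c,
    Complex.exp (2 * Real.pi * I * a * thetaInt k (fun i => (x i : ℤ)) / c)


/-! For coprime `m, n` the map `(u, v) ↦ n·u + m·v` is a bijection
`ZMod m × ZMod n → ZMod (m n)`. As `θ` is a quadratic form,
`θ(n·u + m·v) = n² θ(u) + m² θ(v) + m n · (polar term)`,
and the cross term dies modulo `m n`; moreover
`e^{2πi · n² a θ(u) / (m n)} = e^{2πi · (n a) θ(u) / m}`. Hence every term of `G(a, m n)`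
splits as a term of `G(n a, m)` times a term of `G(m a, n)`. -/

section ThetaForm

variable {R S : Type*} [CommRing R] [CommRing S] {k : ℕ}

def thetaForm (x : Fin k → R) : R :=
  (∑ i, x i ^ 2) + ∑ i, ∑ j ∈ Ioi i, x i * x j

def thetaPolar (u v : Fin k → R) : R :=
  (∑ i, 2 * (u i * v i)) + ∑ i, ∑ j ∈ Ioi i, (u i * v j + u j * v i)

theorem thetaInt_eq_thetaForm (x : Fin k → ℤ) : thetaInt k x = thetaForm x := rfl

theorem map_thetaForm (f : R →+* S) (x : Fin k → R) :
    f (thetaForm x) = thetaForm (f ∘ x) := by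
  simp only [thetaForm, map_add, map_sum, map_pow, map_mul, Function.comp_apply]

theorem thetaForm_smul_add_smul (a b : R) (u v : Fin k → R) :
    thetaForm (a • u + b • v) =
      a ^ 2 * thetaForm u + b ^ 2 * thetaForm v + a * b * thetaPolar u v := by
  have hsq : ∀ i, (a * u i + b * v i) ^ 2 =
      a ^ 2 * u i ^ 2 + b ^ 2 * v i ^ 2 + a * b * (2 * (u i * v i)) := fun i => by ring
  have hmul : ∀ i j, (a * u i + b * v i) * (a * u j + b * v j) =
      a ^ 2 * (u i * u j) + b ^ 2 * (v i * v j) + a * b * (u i * v j + u j * v i) :=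
    fun i j => by ring
  simp only [thetaForm, thetaPolar, Pi.add_apply, Pi.smul_apply, smul_eq_mul, hsq, hmul,
    sum_add_distrib, ← mul_sum]
  ring

theorem intCast_thetaForm (x : Fin k → ℤ) :
    ((thetaForm x : ℤ) : R) = thetaForm fun i => (x i : R) :=
  map_thetaForm (Int.castRingHom R) x

end ThetaForm

theorem GaussG_eq_sum_zmod (k : ℕ) (a : ℤ) (c : ℕ) [NeZero c] :
    GaussG k a c = ∑ x : Fin k → ZMod c, ZMod.stdAddChar ((a : ZMod c) * thetaForm x) := by
  have hinj : Function.Injective fun x : Fin c => ((x : ℕ) : ZMod c) := fun x y hxy =>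
    Fin.ext <| by
      simpa [ZMod.val_cast_of_lt x.isLt, ZMod.val_cast_of_lt y.isLt] using congrArg ZMod.val hxy
  let finEquiv : Fin c ≃ ZMod c :=
    .ofBijective _ <| (Fintype.bijective_iff_injective_and_card _).2 ⟨hinj, by simp⟩
  refine Fintype.sum_equiv (.piCongrRight fun _ => finEquiv) _ _ fun x => ?_
  have hcast : ((a * thetaInt k (fun i => (x i : ℤ)) : ℤ) : ZMod c) =
      (a : ZMod c) * thetaForm ((Equiv.piCongrRight fun _ => finEquiv) x) := by
    rw [Int.cast_mul, thetaInt_eq_thetaForm, intCast_thetaForm]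
    simp only [Int.cast_natCast]
    rfl
  rw [← hcast, ZMod.stdAddChar_coe]
  push_cast
  ring_nf

theorem GaussG_one (k : ℕ) (a : ℤ) : GaussG k a 1 = 1 := by
  simp [GaussG, thetaInt]

theorem ZMod.stdAddChar_intCast_natCast_mul {c m n : ℕ} [NeZero c] [NeZero m] (hc : c = m * n)
    (t : ℤ) : ZMod.stdAddChar (((n * t : ℤ)) : ZMod c) = ZMod.stdAddChar (t : ZMod m) := by
  have hn : (n : ℂ) ≠ 0 := Nat.cast_ne_zero.2 (right_ne_zero_of_mul (hc ▸ NeZero.ne c))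
  rw [ZMod.stdAddChar_coe, ZMod.stdAddChar_coe, hc]
  congr 1
  push_cast
  field_simp

section CRT

variable {m n : ℕ}

def crtMap (m n : ℕ) (p : ZMod m × ZMod n) : ZMod (m * n) :=
  n * p.1.val + m * p.2.val

theorem castHom_crtMap_left [NeZero m] (u : ZMod m) (v : ZMod n) :
    ZMod.castHom (dvd_mul_right m n) (ZMod m) (crtMap m n (u, v)) = n * u := by
  simp only [crtMap, map_add, map_mul, map_natCast, ZMod.natCast_self, zero_mul, add_zero,
    ZMod.natCast_zmod_val]

theorem castHom_crtMap_right [NeZero n] (u : ZMod m) (v : ZMod n) :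
    ZMod.castHom (dvd_mul_left n m) (ZMod n) (crtMap m n (u, v)) = m * v := by
  simp only [crtMap, map_add, map_mul, map_natCast, ZMod.natCast_self, zero_mul, zero_add,
    ZMod.natCast_zmod_val]

theorem crtMap_injective [NeZero m] [NeZero n] (h : m.Coprime n) :
    Function.Injective (crtMap m n) := by
  rintro ⟨u, v⟩ ⟨u', v'⟩ huv
  have hu := congrArg (ZMod.castHom (dvd_mul_right m n) (ZMod m)) huv
  have hv := congrArg (ZMod.castHom (dvd_mul_left n m) (ZMod n)) huv
  rw [castHom_crtMap_left, castHom_crtMap_left] at hu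
  rw [castHom_crtMap_right, castHom_crtMap_right] at hv
  rw [((ZMod.isUnit_iff_coprime n m).2 h.symm).mul_left_cancel hu,
    ((ZMod.isUnit_iff_coprime m n).2 h).mul_left_cancel hv]

noncomputable def crtEquiv [NeZero m] [NeZero n] (h : m.Coprime n) :
    ZMod m × ZMod n ≃ ZMod (m * n) :=
  .ofBijective _ <| (Fintype.bijective_iff_injective_and_card _).2
    ⟨crtMap_injective h, by simp [ZMod.card]⟩

theorem stdAddChar_mul_thetaForm_crtMap {k : ℕ} [NeZero m] [NeZero n] (a : ℤ)
    (u : Fin k → ZMod m) (v : Fin k → ZMod n) :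
    ZMod.stdAddChar ((a : ZMod (m * n)) * thetaForm fun i => crtMap m n (u i, v i)) =
      ZMod.stdAddChar (((n * a : ℤ) : ZMod m) * thetaForm u) *
        ZMod.stdAddChar (((m * a : ℤ) : ZMod n) * thetaForm v) := by
  set U : Fin k → ℤ := fun i => (u i).val
  set V : Fin k → ℤ := fun i => (v i).val
  have hx : (thetaForm fun i => crtMap m n (u i, v i)) =
      ((thetaForm ((n : ℤ) • U + (m : ℤ) • V) : ℤ) : ZMod (m * n)) := by
    rw [intCast_thetaForm]
    simp [crtMap, U, V]
  have hu : thetaForm u = ((thetaForm U : ℤ) : ZMod m) := by simp [intCast_thetaForm, U]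
  have hv : thetaForm v = ((thetaForm V : ℤ) : ZMod n) := by simp [intCast_thetaForm, V]
  have hsplit : a * thetaForm ((n : ℤ) • U + (m : ℤ) • V) =
      n * (n * a * thetaForm U) + m * (m * a * thetaForm V) +
        (m * n : ℕ) * (a * thetaPolar U V) := by
    rw [thetaForm_smul_add_smul]
    push_cast
    ring
  rw [hx, hu, hv, ← Int.cast_mul, ← Int.cast_mul, ← Int.cast_mul, hsplit, Int.cast_add,
    Int.cast_mul (((m * n : ℕ) : ℤ)), Int.cast_natCast, ZMod.natCast_self, zero_mul, add_zero,
    Int.cast_add, AddChar.map_add_eq_mul, ZMod.stdAddChar_intCast_natCast_mul rfl,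
    ZMod.stdAddChar_intCast_natCast_mul (mul_comm m n)]

end CRT

theorem GaussG_mul_of_coprime (k : ℕ) (a : ℤ) {m n : ℕ} (h : m.Coprime n) :
    GaussG k a (m * n) = GaussG k (n * a) m * GaussG k (m * a) n := by
  rcases Nat.eq_zero_or_pos m with rfl | hm
  · simp [(Nat.coprime_zero_left n).1 h, GaussG_one]
  rcases Nat.eq_zero_or_pos n with rfl | hn
  · simp [(Nat.coprime_zero_right m).1 h, GaussG_one]
  have := NeZero.of_pos hm
  have := NeZero.of_pos hn
  let e : (Fin k → ZMod m) × (Fin k → ZMod n) ≃ (Fin k → ZMod (m * n)) :=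
    (Equiv.arrowProdEquivProdArrow _ _ _).symm.trans (.piCongrRight fun _ => crtEquiv h)
  rw [GaussG_eq_sum_zmod, GaussG_eq_sum_zmod, GaussG_eq_sum_zmod,
    ← Fintype.sum_equiv e _ _ fun p => (stdAddChar_mul_thetaForm_crtMap a p.1 p.2).symm,
    Fintype.sum_prod_type, sum_mul_sum]

theorem stmt5_general (N : ℕ) (α β γ : ℕ)
    (hαβ : Nat.Coprime α β) :
    GaussG N (γ : ℤ) (α * β) = GaussG N ((β : ℤ) * γ) α * GaussG N ((α : ℤ) * γ) β :=
  GaussG_mul_of_coprime N γ hαβ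

theorem stmt5 (N : ℕ) (hN : 0 < N) (α β γ : ℕ) (hα : 0 < α) (hβ : 0 < β) (hγ : 0 < γ)
    (hαβ : Nat.Coprime α β) (hαγ : Nat.Coprime α γ) (hβγ : Nat.Coprime β γ) :
    GaussG N (γ : ℤ) (α * β) = GaussG N ((β : ℤ) * γ) α * GaussG N ((α : ℤ) * γ) β :=
  stmt5_general N α β γ hαβ
end

section
/- Let p be an odd prime and let C_p(R) = (4(1−R))^{-1} on (ℤ/pℤ)∖{1}. Then: (i) C_p((p+1)/2) = (p+1)/2, i.e. (p+1)/2 mod p is a fixed point of C_p; (ii) for every 0 ≤ t ≤ p−2 the t-th iterate C_p^t(0) is defined (i.e. C_p^j(0) ≢ 1 mod p for all 0 ≤ j < p−2) and C_p^t(0) = t·(2t+2)^{-1} in ℤ/pℤ; in particular C_p^{p−2}(0) = 1 mod p, and the orbit {C_p^t(0) : t = 0, 1, …, p−2} equals (ℤ/pℤ) ∖ {(p+1)/2 mod p}. -/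
open Complex Finset Filter
open scoped Classical

/-- The map `C_p(R) = (4(1−R))⁻¹` on `ℤ/pℤ`. -/
def CFun (p : ℕ) (R : ZMod p) : ZMod p := (4 * (1 - R))⁻¹

/-!
`C_p` is a Möbius transformation whose only fixed point is `1/2`, a double one, so the
coordinate `s = (1 - 2R)⁻¹` conjugates it to the translation `s ↦ s + 1`. The orbit of
`R = 0`, i.e. `s = 1`, is `s = t + 1`, i.e. `R = t / (2t + 2)`; it meets every `R ≠ 1/2`
as `s` runs over the nonzero residues, and reaches `R = 1` at `s = -1`, i.e. `t = p - 2`.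
-/

section Field

variable {K : Type*} [Field K]

def cOrbit (t : K) : K := t * (2 * t + 2)⁻¹

lemma two_mul_add_two_ne_zero {t : K} (h2 : (2 : K) ≠ 0) (ht : t + 1 ≠ 0) : 2 * t + 2 ≠ 0 := by
  rw [show 2 * t + 2 = 2 * (t + 1) by ring]
  exact mul_ne_zero h2 ht

lemma inv_four_mul_one_sub_cOrbit {t : K} (ht : t + 1 ≠ 0) :
    (4 * (1 - cOrbit t))⁻¹ = cOrbit (t + 1) := by
  unfold cOrbit
  by_cases h2 : (2 : K) = 0
  · simp [show (4 : K) = 2 * 2 by norm_num, h2]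
  · have hd := two_mul_add_two_ne_zero h2 ht
    rw [show 1 - t * (2 * t + 2)⁻¹ = (t + 2) * (2 * t + 2)⁻¹ by field_simp; ring,
      show (2 * (t + 1) + 2 : K) = 2 * (t + 2) by ring, show (4 : K) = 2 * 2 by norm_num]
    simp only [mul_inv, inv_inv]
    field_simp

variable (h2 : (2 : K) ≠ 0)
include h2

lemma cOrbit_eq_iff {t x : K} (ht : t + 1 ≠ 0) : cOrbit t = x ↔ (1 - 2 * x) * (t + 1) = 1 := by
  rw [cOrbit, mul_inv_eq_iff_eq_mul₀ (two_mul_add_two_ne_zero h2 ht)]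
  constructor <;> intro h <;> linear_combination h

lemma cOrbit_eq_one_iff {t : K} (ht : t + 1 ≠ 0) : cOrbit t = 1 ↔ t + 2 = 0 := by
  rw [cOrbit_eq_iff h2 ht]
  constructor <;> intro h <;> linear_combination -h

lemma cOrbit_ne_inv_two {t : K} (ht : t + 1 ≠ 0) : cOrbit t ≠ 2⁻¹ := by
  rw [Ne, cOrbit_eq_iff h2 ht, mul_inv_cancel₀ h2]
  simp

lemma exists_cOrbit_eq {x : K} (hx : x ≠ 2⁻¹) : ∃ t : K, t + 1 ≠ 0 ∧ cOrbit t = x := by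
  have hx' : 1 - 2 * x ≠ 0 := by
    intro h
    exact hx (eq_inv_of_mul_eq_one_left (by linear_combination -h))
  have ht : (1 - 2 * x)⁻¹ - 1 + 1 ≠ 0 := by simpa using hx'
  refine ⟨(1 - 2 * x)⁻¹ - 1, ht, ?_⟩
  rw [cOrbit_eq_iff h2 ht, sub_add_cancel, mul_inv_cancel₀ hx']

end Field

namespace ZMod

variable {p : ℕ}

lemma natCast_eq_zero_iff_of_le {m : ℕ} (h0 : 0 < m) (hm : m ≤ p) :
    (m : ZMod p) = 0 ↔ m = p := by
  rw [natCast_eq_zero_iff]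
  exact ⟨fun hdvd => le_antisymm hm (Nat.le_of_dvd h0 hdvd), fun h => h ▸ dvd_rfl⟩

lemma natCast_add_one_ne_zero {t : ℕ} (ht : t + 1 < p) : (t : ZMod p) + 1 ≠ 0 := by
  exact_mod_cast (natCast_eq_zero_iff_of_le t.succ_pos ht.le).not.mpr ht.ne

lemma natCast_add_two_eq_zero_iff {t : ℕ} (ht : t + 2 ≤ p) :
    (t : ZMod p) + 2 = 0 ↔ t + 2 = p := by
  exact_mod_cast natCast_eq_zero_iff_of_le (by omega) ht

lemma val_le_sub_two_of_add_one_ne_zero [NeZero p] {n : ZMod p} (hn : n + 1 ≠ 0) :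
    n.val ≤ p - 2 := by
  have hlt := n.val_lt
  suffices n.val ≠ p - 1 by omega
  intro hval
  apply hn
  rw [← natCast_zmod_val n, hval, ← Nat.cast_add_one, Nat.sub_add_cancel (by omega),
    natCast_self]

lemma natCast_succ_div_two_eq_inv_two (hp : Odd p) : (((p + 1) / 2 : ℕ) : ZMod p) = 2⁻¹ := by
  have hmul : ((p + 1) / 2) * 2 = p + 1 := Nat.div_mul_cancel hp.add_one.two_dvd
  refine (ZMod.inv_eq_of_mul_eq_one p 2 _ ?_).symm
  have := congrArg (fun n : ℕ => (n : ZMod p)) hmul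
  simp only [Nat.cast_mul, Nat.cast_add, Nat.cast_one, Nat.cast_ofNat, natCast_self,
    zero_add] at this
  rw [mul_comm, this]

end ZMod

lemma CFun_iterate_zero {p : ℕ} [Fact p.Prime] {t : ℕ} (ht : t < p) :
    (CFun p)^[t] 0 = cOrbit (t : ZMod p) := by
  induction t with
  | zero => simp [cOrbit]
  | succ t ih =>
    rw [Function.iterate_succ_apply', ih (by omega), Nat.cast_succ]
    exact inv_four_mul_one_sub_cOrbit (ZMod.natCast_add_one_ne_zero ht)

theorem stmt8 (p : ℕ) (hp : p.Prime) (hodd : p ≠ 2) :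
    (CFun p (((p + 1) / 2 : ℕ) : ZMod p) = (((p + 1) / 2 : ℕ) : ZMod p)) ∧
    (∀ j < p - 2, (CFun p)^[j] 0 ≠ 1) ∧
    (∀ t ≤ p - 2, (CFun p)^[t] 0 = (t : ZMod p) * ((2 * t + 2 : ℕ) : ZMod p)⁻¹) ∧
    ((CFun p)^[p - 2] 0 = 1) ∧
    ({x : ZMod p | ∃ t ≤ p - 2, (CFun p)^[t] 0 = x} =
      {x : ZMod p | x ≠ (((p + 1) / 2 : ℕ) : ZMod p)}) := by
  have : Fact p.Prime := ⟨hp⟩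
  have hp3 : 3 ≤ p := by have := hp.two_le; omega
  have h2 : (2 : ZMod p) ≠ 0 := by
    exact_mod_cast (ZMod.natCast_eq_zero_iff_of_le two_pos (by omega)).not.mpr (by omega)
  have hhalf := ZMod.natCast_succ_div_two_eq_inv_two (hp.odd_of_ne_two hodd)
  refine ⟨?_, fun j hj => ?_, fun t ht => ?_, ?_, ?_⟩
  · rw [hhalf, CFun, show (4 : ZMod p) * (1 - 2⁻¹) = 2 by field_simp; ring]
  · rw [CFun_iterate_zero (by omega), Ne,
      cOrbit_eq_one_iff h2 (ZMod.natCast_add_one_ne_zero (by omega)),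
      ZMod.natCast_add_two_eq_zero_iff (by omega)]
    omega
  · rw [CFun_iterate_zero (by omega), cOrbit]
    push_cast
    rfl
  · rw [CFun_iterate_zero (by omega),
      cOrbit_eq_one_iff h2 (ZMod.natCast_add_one_ne_zero (by omega)),
      ZMod.natCast_add_two_eq_zero_iff (by omega)]
    omega
  · ext x
    rw [Set.mem_ofPred_eq, Set.mem_ofPred_eq, hhalf]
    constructor
    · rintro ⟨t, ht, rfl⟩
      rw [CFun_iterate_zero (by omega)]
      exact cOrbit_ne_inv_two h2 (ZMod.natCast_add_one_ne_zero (by omega))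
    · intro hx
      obtain ⟨n, hn, rfl⟩ := exists_cOrbit_eq h2 hx
      have hval := ZMod.val_le_sub_two_of_add_one_ne_zero hn
      exact ⟨n.val, hval, by rw [CFun_iterate_zero (by omega), ZMod.natCast_zmod_val]⟩
end

section
/- Let N be an odd squarefree positive integer and let d be a divisor of N. Then Π_{p | d, p prime} i^{(N−Np)/2} · ((d/p) / p) = i^{(N−Nd)/2}, where the product is over the prime divisors p of d, ((d/p)/p) denotes the Legendre symbol of the integer d/p modulo p, and the powers of i have the integer exponents (N−Np)/2 and (N−Nd)/2 respectively. -/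
open Complex Finset Filter
open scoped Classical

/-!
Write `F(d) = ∏_{p ∣ d} g(p) · (d/p | p)`. For coprime squarefree `a, b` the factor
`(ab/p | p)` splits as `(a/p | p)(b | p)` when `p ∣ a`, and multiplicativity of the Jacobi symbol
in its lower argument gives `F(ab) = F(a) F(b) (a | b)(b | a)`. By quadratic reciprocity the last
factor is `(-1)^{(a-1)/2 · (b-1)/2}`, which is exactly the defect of multiplicativity of
`m ↦ i^{(N - Nm)/2}` on odd numbers when `N` is odd. Induction over coprime factorizations then
reduces the theorem to the case of a prime, where it is immediate.
-/

theorem jacobiSym_prod_right (a : ℤ) (s : Finset ℕ) (hs : ∀ n ∈ s, n ≠ 0) :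
    jacobiSym a (∏ n ∈ s, n) = ∏ n ∈ s, jacobiSym a n := by
  induction s using Finset.induction with
  | empty => simp [jacobiSym.one_right]
  | insert x s hx ih =>
    rw [prod_insert hx, prod_insert hx,
      jacobiSym.mul_right' a (hs x (mem_insert_self x s))
        (prod_ne_zero_iff.mpr fun n hn => hs n (mem_insert_of_mem hn)),
      ih fun n hn => hs n (mem_insert_of_mem hn)]

theorem jacobiSym_prod_primeFactors (a : ℤ) {n : ℕ} (hn : Squarefree n) :
    ∏ p ∈ n.primeFactors, jacobiSym a p = jacobiSym a n := by
  rw [← jacobiSym_prod_right a _ fun p hp => (Nat.prime_of_mem_primeFactors hp).ne_zero,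
    Nat.prod_primeFactors_of_squarefree hn]

theorem jacobiSym_mul_jacobiSym_swap {a b : ℕ} (ha : Odd a) (hb : Odd b) (hab : a.Coprime b) :
    jacobiSym a b * jacobiSym b a = (-1) ^ (a / 2 * (b / 2)) := by
  have hgcd : Int.gcd b a = 1 := by rw [Int.gcd_natCast_natCast]; exact hab.symm
  rw [jacobiSym.quadratic_reciprocity ha hb, mul_assoc, ← sq, jacobiSym.sq_one hgcd, mul_one]

theorem I_zpow_half_mul {N : ℤ} (hN : Odd N) {a b : ℕ} (ha : Odd a) (hb : Odd b) :
    I ^ ((N - N * (a * b : ℕ)) / 2) =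
      I ^ ((N - N * a) / 2) * I ^ ((N - N * b) / 2) * (-1) ^ (a / 2 * (b / 2)) := by
  obtain ⟨k, rfl⟩ := ha
  obtain ⟨l, rfl⟩ := hb
  have hk : (2 * k + 1) / 2 = k := by omega
  have hl : (2 * l + 1) / 2 = l := by omega
  have half (x : ℤ) : x * 2 / 2 = x := Int.mul_ediv_cancel x two_ne_zero
  have hab : N - N * ((2 * k + 1) * (2 * l + 1) : ℕ) =
      (-N * k + -N * l + 2 * (-N * (k * l))) * 2 := by push_cast; ring
  have ha' : N - N * (2 * k + 1 : ℕ) = -N * k * 2 := by push_cast; ring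
  have hb' : N - N * (2 * l + 1 : ℕ) = -N * l * 2 := by push_cast; ring
  have hsign : I ^ (2 * (-N * (k * l))) = (-1) ^ (k * l) := by
    rw [zpow_mul, zpow_two, I_mul_I, neg_mul, zpow_neg, zpow_mul, hN.neg_one_zpow, ← inv_zpow,
      inv_neg_one, ← Nat.cast_mul, zpow_natCast]
  rw [hk, hl, hab, ha', hb', half, half, half, zpow_add₀ I_ne_zero, zpow_add₀ I_ne_zero, hsign]

section CofactorProd

variable {R : Type*} [CommRing R] (g : ℕ → R)

def jacobiCofactorProd (d : ℕ) : R :=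
  ∏ p ∈ d.primeFactors, g p * (jacobiSym (d / p : ℕ) p : R)

@[simp]
theorem jacobiCofactorProd_one : jacobiCofactorProd g 1 = 1 := by
  simp [jacobiCofactorProd]

theorem jacobiCofactorProd_prime {p : ℕ} (hp : p.Prime) : jacobiCofactorProd g p = g p := by
  rw [jacobiCofactorProd, hp.primeFactors, prod_singleton, Nat.div_self hp.pos, Nat.cast_one,
    jacobiSym.one_left, Int.cast_one, mul_one]

theorem prod_primeFactors_jacobiSym_mul_div {a : ℕ} (ha : Squarefree a) (b : ℕ) :
    ∏ p ∈ a.primeFactors, g p * (jacobiSym (a * b / p : ℕ) p : R) =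
      jacobiCofactorProd g a * (jacobiSym b a : R) := by
  rw [jacobiCofactorProd, ← jacobiSym_prod_primeFactors _ ha, Int.cast_prod, ← prod_mul_distrib]
  refine prod_congr rfl fun p hp => ?_
  rw [Nat.mul_div_right_comm (Nat.dvd_of_mem_primeFactors hp), Nat.cast_mul, jacobiSym.mul_left,
    Int.cast_mul]
  ring

theorem jacobiCofactorProd_mul {a b : ℕ} (hab : a.Coprime b) (ha : Squarefree a)
    (hb : Squarefree b) :
    jacobiCofactorProd g (a * b) =
      jacobiCofactorProd g a * jacobiCofactorProd g b * (jacobiSym a b * jacobiSym b a : ℤ) := by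
  have hb' := prod_primeFactors_jacobiSym_mul_div g hb a
  rw [mul_comm b a] at hb'
  rw [jacobiCofactorProd, hab.primeFactors_mul, prod_union hab.disjoint_primeFactors,
    prod_primeFactors_jacobiSym_mul_div g ha, hb', Int.cast_mul]
  ring

end CofactorProd

theorem jacobiCofactorProd_I_zpow {N : ℤ} (hN : Odd N) {d : ℕ} (hd : Odd d) (hsf : Squarefree d) :
    jacobiCofactorProd (fun p : ℕ => I ^ ((N - N * p) / 2)) d = I ^ ((N - N * d) / 2) := by
  induction d using Nat.recOnPosPrimePosCoprime with
  | prime_pow p n hp hn =>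
    obtain ⟨-, rfl⟩ := (Nat.squarefree_pow_iff hp.ne_one hn.ne').mp hsf
    rw [pow_one, jacobiCofactorProd_prime _ hp]
  | zero => exact absurd hd Nat.not_odd_zero
  | one => simp
  | coprime a b _ _ hab iha ihb =>
    obtain ⟨ha, hb⟩ := Nat.odd_mul.mp hd
    obtain ⟨-, hsfa, hsfb⟩ := Nat.squarefree_mul_iff.mp hsf
    rw [jacobiCofactorProd_mul _ hab hsfa hsfb, iha ha hsfa, ihb hb hsfb,
      jacobiSym_mul_jacobiSym_swap ha hb hab, I_zpow_half_mul hN ha hb]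
    push_cast
    ring

theorem stmt12 (N : ℕ) (hodd : Odd N) (hsf : Squarefree N) (d : ℕ) (hd : d ∣ N) :
    (∏ p ∈ d.primeFactors,
        Complex.I ^ (((N : ℤ) - (N : ℤ) * p) / 2) * (jacobiSym ((d / p : ℕ) : ℤ) p : ℂ)) =
      Complex.I ^ (((N : ℤ) - (N : ℤ) * d) / 2) :=
  jacobiCofactorProd_I_zpow hodd.natCast (hodd.of_dvd_nat hd) (hsf.squarefree_of_dvd hd)
end

section
/- Let N be a squarefree positive integer with gcd(N,6) = 1 and let c, d be divisors of N. Define the rational number v(c,d) = (N/(24c)) · ( (d²·gcd(N/d,c)² − gcd(d,c)²) / d ), which is the order of vanishing of the eta quotient η^N((N/d)z)/η(dz) at the cusp 1/c. Then v(c,d) = 0 if c = d, and v(c,d) > 0 if c ≠ d. -/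
open Complex Finset Filter
open scoped Classical

/- Write `g = gcd(d,c)` and `h = gcd(N/d,c)`; the sign is that of `d h − g`. As `d` and `N/d` are
coprime, `g h = c`, so `g (d h) = d c ≥ g²` (because `g ≤ c` and `g ≤ d`), with equality exactly
when `g = c = d`. -/

theorem Nat.gcd_mul_gcd_div_of_squarefree {N c d : ℕ} (hN : Squarefree N) (hc : c ∣ N)
    (hd : d ∣ N) : Nat.gcd d c * Nat.gcd (N / d) c = c := by
  have hcop : d.Coprime (N / d) :=
    Nat.coprime_of_squarefree_mul (by rwa [Nat.mul_div_cancel' hd])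
  rw [Nat.gcd_comm d, Nat.gcd_comm (N / d), ← hcop.gcd_mul, Nat.mul_div_cancel' hd,
    Nat.gcd_eq_left hc]

theorem Nat.gcd_lt_mul_of_gcd_mul_eq {c d h : ℕ} (hc : 0 < c) (hd : 0 < d)
    (hgh : Nat.gcd d c * h = c) (hne : c ≠ d) : Nat.gcd d c < d * h := by
  have hgd : Nat.gcd d c ≤ d := Nat.le_of_dvd hd (Nat.gcd_dvd_left d c)
  have hgc : Nat.gcd d c ≤ c := Nat.le_of_dvd hc (Nat.gcd_dvd_right d c)
  by_contra! hle
  have hdc : d * c ≤ Nat.gcd d c * Nat.gcd d c :=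
    calc d * c = Nat.gcd d c * (d * h) := by rw [mul_left_comm, hgh]
      _ ≤ Nat.gcd d c * Nat.gcd d c := Nat.mul_le_mul_left _ hle
  have hgc' : Nat.gcd d c = c :=
    le_antisymm hgc (Nat.le_of_mul_le_mul_left (hdc.trans (Nat.mul_le_mul_right _ hgd)) hd)
  rw [hgc'] at hdc hgd
  exact hne (le_antisymm hgd (Nat.le_of_mul_le_mul_right hdc hc))

theorem stmt16_general (N : ℕ) (hsf : Squarefree N)
    (c d : ℕ) (hc : c ∣ N) (hd : d ∣ N) :
    (c = d →
      ((N : ℚ) / (24 * c)) *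
        (((d : ℚ) ^ 2 * (Nat.gcd (N / d) c : ℚ) ^ 2 - (Nat.gcd d c : ℚ) ^ 2) / d) = 0) ∧
    (c ≠ d →
      0 < ((N : ℚ) / (24 * c)) *
        (((d : ℚ) ^ 2 * (Nat.gcd (N / d) c : ℚ) ^ 2 - (Nat.gcd d c : ℚ) ^ 2) / d)) := by
  have hN : 0 < N := Nat.pos_of_ne_zero hsf.ne_zero
  have hc0 : 0 < c := Nat.pos_of_dvd_of_pos hc hN
  have hd0 : 0 < d := Nat.pos_of_dvd_of_pos hd hN
  have hgh := Nat.gcd_mul_gcd_div_of_squarefree hsf hc hd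
  constructor
  · rintro rfl
    have hh : Nat.gcd (N / c) c = 1 := by
      rw [Nat.gcd_self] at hgh
      exact (Nat.mul_eq_left hc0.ne').mp hgh
    rw [hh, Nat.gcd_self]
    ring
  · intro hne
    have hlt : (Nat.gcd d c : ℚ) < d * Nat.gcd (N / d) c := by
      exact_mod_cast Nat.gcd_lt_mul_of_gcd_mul_eq hc0 hd0 hgh hne
    have hg : (0 : ℚ) ≤ Nat.gcd d c := Nat.cast_nonneg _
    exact mul_pos (by positivity) (div_pos (by nlinarith) (by positivity))

theorem stmt16 (N : ℕ) (hsf : Squarefree N) (h6 : Nat.gcd N 6 = 1)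
    (c d : ℕ) (hc : c ∣ N) (hd : d ∣ N) :
    (c = d →
      ((N : ℚ) / (24 * c)) *
        (((d : ℚ) ^ 2 * (Nat.gcd (N / d) c : ℚ) ^ 2 - (Nat.gcd d c : ℚ) ^ 2) / d) = 0) ∧
    (c ≠ d →
      0 < ((N : ℚ) / (24 * c)) *
        (((d : ℚ) ^ 2 * (Nat.gcd (N / d) c : ℚ) ^ 2 - (Nat.gcd d c : ℚ) ^ 2) / d)) :=
  stmt16_general N hsf c d hc hd
end

section
/- Let N be a squarefree positive integer with gcd(N,6) = 1, let d be a divisor of N, and let v, w ∈ ℤ with (N/d)·w − d·v = 1. Then (w/d)^N · e( (N·(N/d + w)·d − N·v·w·(d²−1) − 3·N·d + 1 − d·v) / 24 ) = ((N/d)/d) · e( (1 − N·d)/8 ), where e(x) = e^{2πix}, (w/d) and ((N/d)/d) denote Jacobi symbols, and the arguments of e are rational numbers. -/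
open Complex Finset Filter
open scoped Classical

/-- `e(x) = e^{2πix}` for rational `x`. -/
noncomputable def eQ (x : ℚ) : ℂ := Complex.exp (2 * Real.pi * Complex.I * (x : ℂ))

/-!
Put `n = N/d`. Since `n w ≡ 1 (mod d)`, the Jacobi symbols `(n/d)` and `(w/d)` are equal units, and
`N` is odd, so `(w/d)^N = (n/d)`. The two arguments of `e` differ by `B/24` with
`B = (N² − 1) + (d² − 1) n w (1 − d v) + (n w − d v − 1)`, and every square coprime to `6` is
`1 mod 24`, so this difference is an integer.
-/

lemma eQ_add_intCast (x : ℚ) (k : ℤ) : eQ (x + k) = eQ x := by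
  rw [eQ, eQ, Rat.cast_add, Rat.cast_intCast, mul_add, Complex.exp_add, mul_comm _ (k : ℂ),
    Complex.exp_int_mul_two_pi_mul_I, mul_one]

lemma jacobiSym_pow_of_odd (a : ℤ) (b : ℕ) {k : ℕ} (hk : Odd k) :
    jacobiSym a b ^ k = jacobiSym a b := by
  rcases jacobiSym.trichotomy a b with h | h | h <;> rw [h]
  · exact zero_pow hk.pos.ne'
  · exact one_pow k
  · exact hk.neg_one_pow

lemma jacobiSym_eq_of_mul_modEq_one {a b : ℤ} {m : ℕ} (h : a * b ≡ 1 [ZMOD m]) :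
    jacobiSym a m = jacobiSym b m := by
  apply Int.eq_of_mul_eq_one
  rw [← jacobiSym.mul_left, jacobiSym.mod_left' h, jacobiSym.one_left]

lemma Int.twentyFour_dvd_sq_sub_one {x : ℤ} (hx : IsCoprime x 6) : 24 ∣ x ^ 2 - 1 := by
  have h8 : 8 ∣ x ^ 2 - 1 := Int.eight_dvd_sq_sub_one_of_odd
    (Int.isCoprime_two_right.mp (hx.of_isCoprime_of_dvd_right (by norm_num)))
  have h3 : 3 ∣ x ^ 2 - 1 := (Int.ModEq.pow_card_sub_one_eq_one Nat.prime_three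
    (hx.of_isCoprime_of_dvd_right (by norm_num))).symm.dvd
  simpa using (show IsCoprime (3 : ℤ) 8 by norm_num).mul_dvd h3 h8

lemma twentyFour_dvd_exponent_sub {n d v w : ℤ} (hvw : n * w - d * v = 1)
    (hN : IsCoprime (n * d) 6) (hd : IsCoprime d 6) :
    24 ∣ n * d * (n + w) * d - n * d * v * w * (d ^ 2 - 1) - d * v - 2 := by
  obtain ⟨a, ha⟩ := Int.twentyFour_dvd_sq_sub_one hN
  obtain ⟨b, hb⟩ := Int.twentyFour_dvd_sq_sub_one hd
  exact ⟨a + b * n * w * (1 - d * v), by linear_combination ha + n * w * (1 - d * v) * hb + hvw⟩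

theorem stmt17_general (N : ℕ) (h6 : Nat.gcd N 6 = 1)
    (d : ℕ) (hd : d ∣ N) (v w : ℤ) (hvw : ((N / d : ℕ) : ℤ) * w - (d : ℤ) * v = 1) :
    ((jacobiSym w d : ℂ)) ^ N *
      eQ (((N : ℚ) * (((N / d : ℕ) : ℚ) + (w : ℚ)) * (d : ℚ) -
            (N : ℚ) * (v : ℚ) * (w : ℚ) * ((d : ℚ) ^ 2 - 1) -
            3 * (N : ℚ) * (d : ℚ) + 1 - (d : ℚ) * (v : ℚ)) / 24) =
      (jacobiSym ((N / d : ℕ) : ℤ) d : ℂ) * eQ ((1 - (N : ℚ) * (d : ℚ)) / 8) := by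
  set n := N / d
  have hnd : (n : ℤ) * d = N := by exact_mod_cast Nat.div_mul_cancel hd
  have hN6 : IsCoprime (N : ℤ) 6 := Nat.isCoprime_iff_coprime.mpr h6
  have hd6 : IsCoprime (d : ℤ) 6 := hN6.of_isCoprime_of_dvd_left (Int.natCast_dvd_natCast.mpr hd)
  have hNodd : Odd N := by
    exact_mod_cast Int.isCoprime_two_right.mp (hN6.of_isCoprime_of_dvd_right (by norm_num))
  have hJ : jacobiSym n d = jacobiSym w d :=
    jacobiSym_eq_of_mul_modEq_one (Int.modEq_iff_dvd.mpr ⟨-v, by linear_combination -hvw⟩)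
  obtain ⟨k, hk⟩ := twentyFour_dvd_exponent_sub hvw (hnd ▸ hN6) hd6
  rw [← Int.cast_pow, jacobiSym_pow_of_odd _ _ hNodd, hJ]
  congr 1
  have hkQ := congrArg (Int.cast : ℤ → ℚ) hk
  have hndQ := congrArg (Int.cast : ℤ → ℚ) hnd
  push_cast at hkQ hndQ
  refine (congrArg eQ ?_).trans (eQ_add_intCast _ k)
  rw [← hndQ]
  linear_combination hkQ / 24

theorem stmt17 (N : ℕ) (hsf : Squarefree N) (h6 : Nat.gcd N 6 = 1)
    (d : ℕ) (hd : d ∣ N) (v w : ℤ) (hvw : ((N / d : ℕ) : ℤ) * w - (d : ℤ) * v = 1) :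
    ((jacobiSym w d : ℂ)) ^ N *
      eQ (((N : ℚ) * (((N / d : ℕ) : ℚ) + (w : ℚ)) * (d : ℚ) -
            (N : ℚ) * (v : ℚ) * (w : ℚ) * ((d : ℚ) ^ 2 - 1) -
            3 * (N : ℚ) * (d : ℚ) + 1 - (d : ℚ) * (v : ℚ)) / 24) =
      (jacobiSym ((N / d : ℕ) : ℤ) d : ℂ) * eQ ((1 - (N : ℚ) * (d : ℚ)) / 8) :=
  stmt17_general N h6 d hd v w hvw
end

section
/- Let r ≥ 1 be an integer and let V_r(n) = Σ_{(x_1,…,x_r) ∈ ℕ₀^r, x_1+⋯+x_r = n} Π_{i=1}^r P(x_i). Then lim_{n→∞} V_r(n)/V_r(n−1) = 1. -/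
open Complex Finset Filter
open scoped Classical

/-!
Since `V_{r+1}` is the Cauchy product of `P` and `V_r`, it suffices to show that the positive
nondecreasing sequences whose consecutive ratios tend to `1` include `P` and are closed under
Cauchy products.

For `P`, the increment `P(n+1) - P(n)` counts the partitions of `n + 1` without ones, and these
are `o(P)`: those with at least `m` distinct part sizes inject `m`-to-one into all partitions
(turn one part `s` into `s` ones), while those with fewer are polynomially many, and `P` outgrows
every polynomial.

For `c = a * b`, `c(n+1) - c(n) = a(0) b(n+1) + Σ_{i+j=n} (a(i+1) - a(i)) b(j)`. The terms with
large `i` contribute at most `ε c(n)`, the others `O(b(n+1))`; and `b(n+1) = o(c(n))` because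
`c(n) ≥ a(0) Σ_{j ≤ n} b(j)`, while a sequence whose ratios tend to `1` is negligible against its
partial sums.
-/

open Asymptotics Topology

structure SlowlyGrowing (a : ℕ → ℝ) : Prop where
  monotone : Monotone a
  pos_zero : 0 < a 0
  tendsto_succ_div : Tendsto (fun n => a (n + 1) / a n) atTop (𝓝 1)

lemma SlowlyGrowing.pos {a : ℕ → ℝ} (ha : SlowlyGrowing a) (n : ℕ) : 0 < a n :=
  ha.pos_zero.trans_le (ha.monotone n.zero_le)

section RatioLimit

variable {b : ℕ → ℝ}

lemma tendsto_add_div_of_tendsto_succ_div (hb : ∀ n, 0 < b n)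
    (h : Tendsto (fun n => b (n + 1) / b n) atTop (𝓝 1)) (k : ℕ) :
    Tendsto (fun n => b (n + k) / b n) atTop (𝓝 1) := by
  induction k with
  | zero => simp [div_self (hb _).ne']
  | succ k ih =>
    have hshift := h.comp (tendsto_add_atTop_nat k)
    have hprod := hshift.mul ih
    rw [mul_one] at hprod
    refine hprod.congr fun n => ?_
    simp only [Function.comp_apply]
    rw [← add_assoc, div_mul_div_cancel₀ (hb _).ne']

lemma tendsto_div_sum_range_of_tendsto_succ_div (hb : ∀ n, 0 < b n)
    (h : Tendsto (fun n => b (n + 1) / b n) atTop (𝓝 1)) :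
    Tendsto (fun n => b n / ∑ i ∈ range n, b i) atTop (𝓝 0) := by
  refine tendsto_order.2 ⟨fun l hl => Eventually.of_forall fun n =>
    hl.trans_le (div_nonneg (hb n).le (sum_nonneg fun i _ => (hb i).le)), fun ε hε => ?_⟩
  obtain ⟨J, hJ⟩ := exists_nat_gt (2 / ε)
  have hJpos : (0 : ℝ) < J := (div_pos two_pos hε).trans hJ
  -- eventually `b (m + J)` is less than twice the mean of the `J` terms before it
  have hwindow : Tendsto (fun m => ∑ k ∈ range J, b (m + k) / b (m + J)) atTop (𝓝 J) := by
    have hsum := tendsto_finsetSum (range J) fun k _ =>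
      (tendsto_add_div_of_tendsto_succ_div hb h k).div
        (tendsto_add_div_of_tendsto_succ_div hb h J) one_ne_zero
    simp only [div_one, sum_const, card_range, nsmul_eq_mul, mul_one] at hsum
    refine hsum.congr fun m => sum_congr rfl fun k _ => ?_
    exact div_div_div_cancel_right₀ (hb m).ne' _ _
  rw [← map_add_atTop_eq_nat J, eventually_map]
  filter_upwards [hwindow.eventually (lt_mem_nhds (half_lt_self hJpos))] with m hm
  have hsum : ∑ k ∈ range J, b (m + k) ≤ ∑ i ∈ range (m + J), b i := by
    rw [sum_range_add]
    exact le_add_of_nonneg_left (sum_nonneg fun i _ => (hb i).le)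
  rw [← sum_div, lt_div_iff₀ (hb _)] at hm
  have hpos := mul_pos (half_pos hJpos) (hb (m + J))
  rw [div_lt_iff₀ (by linarith)]
  rw [div_lt_iff₀ hε] at hJ
  nlinarith [hb (m + J)]

end RatioLimit

def cauchyProduct (a b : ℕ → ℝ) (n : ℕ) : ℝ := ∑ p ∈ antidiagonal n, a p.1 * b p.2

section CauchyProduct

variable {a b : ℕ → ℝ}

lemma cauchyProduct_zero : cauchyProduct a b 0 = a 0 * b 0 := by
  simp [cauchyProduct]

lemma cauchyProduct_succ (n : ℕ) :
    cauchyProduct a b (n + 1) = a 0 * b (n + 1) + ∑ p ∈ antidiagonal n, a (p.1 + 1) * b p.2 :=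
  Finset.Nat.sum_antidiagonal_succ

lemma monotone_cauchyProduct (ha : Monotone a) (ha0 : 0 ≤ a 0) (hb : ∀ n, 0 ≤ b n) :
    Monotone (cauchyProduct a b) := by
  refine monotone_nat_of_le_succ fun n => ?_
  rw [cauchyProduct_succ]
  refine le_add_of_nonneg_of_le (mul_nonneg ha0 (hb _)) (sum_le_sum fun p _ => ?_)
  exact mul_le_mul_of_nonneg_right (ha p.1.le_succ) (hb _)

lemma mul_sum_range_le_cauchyProduct (ha : Monotone a) (hb : ∀ n, 0 ≤ b n) (n : ℕ) :
    a 0 * ∑ j ∈ range (n + 1), b j ≤ cauchyProduct a b n := by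
  have hswap : ∑ p ∈ antidiagonal n, a 0 * b p.2 = a 0 * ∑ j ∈ range (n + 1), b j := by
    rw [← Finset.Nat.sum_antidiagonal_swap, Finset.Nat.sum_antidiagonal_eq_sum_range_succ_mk,
      mul_sum]
    rfl
  rw [← hswap]
  exact sum_le_sum fun p _ => mul_le_mul_of_nonneg_right (ha p.1.zero_le) (hb _)

/-- The increments of `a` before `T`, collected in the telescoping `e`, meet `b` at arguments at
most `n + 1`. -/
lemma cauchyProduct_succ_le (ha : Monotone a) (ha0 : 0 ≤ a 0) (hb : Monotone b) (hb0 : 0 ≤ b 0)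
    {ε : ℝ} (hε : 0 ≤ ε) {T : ℕ} (hT : ∀ i ≥ T, a (i + 1) ≤ (1 + ε) * a i) (n : ℕ) :
    cauchyProduct a b (n + 1) ≤ (1 + ε) * cauchyProduct a b n + a T * b (n + 1) := by
  have hb' : ∀ n, 0 ≤ b n := fun n => hb0.trans (hb n.zero_le)
  set e : ℕ → ℝ := fun i => a (min (i + 1) T) - a (min i T)
  have hsplit : ∀ i, a (i + 1) ≤ (1 + ε) * a i + e i := by
    intro i
    rcases le_or_gt T i with hi | hi
    · simp only [e, min_eq_right hi, min_eq_right (hi.trans i.le_succ), sub_self, add_zero]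
      exact hT i hi
    · simp only [e, min_eq_left hi.le, min_eq_left (Nat.succ_le_of_lt hi)]
      nlinarith [ha0.trans (ha i.zero_le)]
  have hboundary : ∑ p ∈ antidiagonal n, e p.1 * b p.2 ≤ (a T - a 0) * b (n + 1) := by
    have he : ∀ i, 0 ≤ e i := fun i => sub_nonneg.2 (ha (min_le_min_right T i.le_succ))
    calc ∑ p ∈ antidiagonal n, e p.1 * b p.2
        ≤ ∑ p ∈ antidiagonal n, e p.1 * b (n + 1) := sum_le_sum fun p hp =>
          mul_le_mul_of_nonneg_left (hb (by have := mem_antidiagonal.1 hp; omega)) (he _)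
      _ = (a (min (n + 1) T) - a 0) * b (n + 1) := by
          rw [← sum_mul, Finset.Nat.sum_antidiagonal_eq_sum_range_succ_mk,
            sum_range_sub (fun i => a (min i T))]
          simp
      _ ≤ (a T - a 0) * b (n + 1) := by
          gcongr
          · exact hb' _
          · exact ha (min_le_right _ _)
  calc cauchyProduct a b (n + 1)
      ≤ a 0 * b (n + 1) + ∑ p ∈ antidiagonal n, ((1 + ε) * a p.1 + e p.1) * b p.2 := by
        rw [cauchyProduct_succ]
        gcongr with p
        · exact hb' _
        · exact hsplit _
    _ = a 0 * b (n + 1) + (1 + ε) * cauchyProduct a b n +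
          ∑ p ∈ antidiagonal n, e p.1 * b p.2 := by
        simp only [add_mul, sum_add_distrib, mul_assoc, ← mul_sum, cauchyProduct]
        ring
    _ ≤ (1 + ε) * cauchyProduct a b n + a T * b (n + 1) := by linarith

lemma SlowlyGrowing.tendsto_succ_div_cauchyProduct (ha : Monotone a) (ha0 : 0 < a 0)
    (hb : SlowlyGrowing b) :
    Tendsto (fun n => b (n + 1) / cauchyProduct a b n) atTop (𝓝 0) := by
  have hlim := ((tendsto_add_atTop_iff_nat 1).2
    (tendsto_div_sum_range_of_tendsto_succ_div hb.pos hb.tendsto_succ_div)).div_const (a 0)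
  rw [zero_div] at hlim
  have hS : ∀ n, 0 < ∑ j ∈ range (n + 1), b j := fun n =>
    sum_pos (fun j _ => hb.pos j) nonempty_range_add_one
  have hlow := mul_sum_range_le_cauchyProduct ha (fun j => (hb.pos j).le)
  refine squeeze_zero (fun n => div_nonneg (hb.pos _).le ((mul_pos ha0 (hS n)).le.trans (hlow n)))
    (fun n => ?_) hlim
  rw [div_div, mul_comm]
  exact div_le_div_of_nonneg_left (hb.pos _).le (mul_pos ha0 (hS n)) (hlow n)

theorem slowlyGrowing_cauchyProduct (ha : SlowlyGrowing a) (hb : SlowlyGrowing b) :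
    SlowlyGrowing (cauchyProduct a b) := by
  have hb' : ∀ n, 0 ≤ b n := fun n => (hb.pos n).le
  have hmono := monotone_cauchyProduct ha.monotone ha.pos_zero.le hb'
  have hc0 : 0 < cauchyProduct a b 0 := by
    rw [cauchyProduct_zero]; exact mul_pos ha.pos_zero hb.pos_zero
  have hc : ∀ n, 0 < cauchyProduct a b n := fun n => hc0.trans_le (hmono n.zero_le)
  refine ⟨hmono, hc0, tendsto_order.2
    ⟨fun l hl => Eventually.of_forall fun n => ?_, fun u hu => ?_⟩⟩
  · rw [lt_div_iff₀ (hc n)]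
    nlinarith [hmono n.le_succ, hc n]
  · set ε := (u - 1) / 3 with hε
    have hεpos : 0 < ε := by rw [hε]; linarith
    obtain ⟨T, hT⟩ := eventually_atTop.1 <|
      ha.tendsto_succ_div.eventually (ge_mem_nhds (lt_add_of_pos_right 1 hεpos))
    have hT' : ∀ i ≥ T, a (i + 1) ≤ (1 + ε) * a i := fun i hi => by
      have := hT i hi
      rwa [div_le_iff₀ (ha.pos i)] at this
    filter_upwards [((hb.tendsto_succ_div_cauchyProduct ha.monotone ha.pos_zero).const_mul
      (a T)).eventually (gt_mem_nhds (by simpa using hεpos))] with n hn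
    have hstep := cauchyProduct_succ_le ha.monotone ha.pos_zero.le hb.monotone hb.pos_zero.le
      hεpos.le hT' n
    rw [mul_div_assoc', div_lt_iff₀ (hc n)] at hn
    rw [div_lt_iff₀ (hc n)]
    nlinarith [hc n]

end CauchyProduct

namespace Nat.Partition

def withoutOnes (n : ℕ) : Finset n.Partition := {l | 1 ∉ l.parts}

def shatter {n : ℕ} (l : n.Partition) {s : ℕ} (hs : s ∈ l.parts) : n.Partition where
  parts := Multiset.replicate s 1 + l.parts.erase s
  parts_pos {i} hi := by
    rcases Multiset.mem_add.1 hi with h | h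
    · simp [Multiset.eq_of_mem_replicate h]
    · exact l.parts_pos (Multiset.mem_of_mem_erase h)
  parts_sum := by
    rw [Multiset.sum_add, Multiset.sum_replicate, smul_eq_mul, mul_one, Multiset.sum_erase hs,
      l.parts_sum]

lemma shatter_injOn {n : ℕ} {S : Finset n.Partition} (hS : ∀ l ∈ S, 1 ∉ l.parts) :
    Set.InjOn
      (fun z : (_ : n.Partition) × ℕ => if h : z.2 ∈ z.1.parts then shatter z.1 h else z.1)
      (S.sigma fun l => l.parts.toFinset) := by
  rintro ⟨l, s⟩ hls ⟨l', s'⟩ hls' heq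
  simp only [coe_sigma, Set.mem_sigma_iff, mem_coe, Multiset.mem_toFinset] at hls hls'
  simp only [dif_pos hls.2, dif_pos hls'.2] at heq
  have hparts := congrArg Nat.Partition.parts heq
  simp only [shatter] at hparts
  -- the number of ones recovers `s`, because `l` has none
  have hs : s = s' := by
    have := congrArg (Multiset.count 1) hparts
    simpa [Multiset.count_eq_zero_of_notMem
        (fun h => hS l hls.1 (Multiset.mem_of_mem_erase h)),
      Multiset.count_eq_zero_of_notMem
        (fun h => hS l' hls'.1 (Multiset.mem_of_mem_erase h))] using this
  subst hs
  have hl : l = l' := Nat.Partition.ext <| by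
    rw [← Multiset.cons_erase hls.2, ← Multiset.cons_erase hls'.2, add_left_cancel hparts]
  subst hl
  rfl

lemma card_parts_le {n : ℕ} (l : n.Partition) : Multiset.card l.parts ≤ n := by
  simpa [l.parts_sum] using Multiset.card_nsmul_le_sum fun _ hx => l.parts_pos hx

end Nat.Partition

open Nat.Partition

lemma partitionCount_pos (n : ℕ) : 0 < partitionCount n := Fintype.card_pos

lemma partitionCount_zero : partitionCount 0 = 1 := Fintype.card_unique

lemma partitionCount_succ (n : ℕ) :
    partitionCount (n + 1) = partitionCount n + #(withoutOnes (n + 1)) := by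
  have hones : #{l : (n + 1).Partition | 1 ∈ l.parts} = partitionCount n := by
    rw [← Fintype.card_subtype, partitionCount]
    exact Fintype.card_congr (partitionWithPartEquiv le_rfl (Nat.le_add_left 1 n))
  rw [← hones, withoutOnes, card_filter_add_card_filter_not]
  rfl

lemma partitionCount_mono : Monotone partitionCount :=
  monotone_nat_of_le_succ fun n => (partitionCount_succ n).symm ▸ Nat.le_add_right _ _

lemma pow_le_partitionCount {k M t : ℕ} (h : M * (k + 2) ^ 2 ≤ t) : M ^ k ≤ partitionCount t := by
  let big : (Fin k → Fin M) → Multiset ℕ := fun x => ∑ j, Multiset.replicate (x j) (j + 2)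
  have hbig : ∀ x, (big x).sum ≤ t := fun x => by
    calc (big x).sum = ∑ j, (x j : ℕ) * (j + 2) := by
          rw [← Multiset.coe_sumAddMonoidHom, map_sum]
          simp [Multiset.sum_replicate]
      _ ≤ ∑ _j : Fin k, M * (k + 2) := sum_le_sum fun j _ =>
          Nat.mul_le_mul (x j).2.le (by omega)
      _ ≤ t := by simp only [sum_const, card_univ, Fintype.card_fin, smul_eq_mul]; nlinarith
  have hcount : ∀ x (j : Fin k), (big x).count ((j : ℕ) + 2) = x j := fun x j => by
    simp only [big, Multiset.count_sum', Multiset.count_replicate]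
    rw [sum_eq_single j (fun i _ hij => if_neg (by omega)) (by simp)]
    simp
  let f : (Fin k → Fin M) → t.Partition := fun x => Nat.Partition.ofSums t
    (big x + Multiset.replicate (t - (big x).sum) 1) (by simp; have := hbig x; omega)
  have hf : Function.Injective f := fun x y hxy => funext fun j => Fin.ext <| by
    have := congrArg (fun l : t.Partition => l.parts.count ((j : ℕ) + 2)) hxy
    simpa [f, count_ofSums_of_ne_zero, hcount, Multiset.count_replicate] using this
  simpa [partitionCount] using Fintype.card_le_of_injective f hf

lemma mul_card_filter_withoutOnes_le (t m : ℕ) :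
    m * #{l ∈ withoutOnes t | m ≤ l.parts.toFinset.card} ≤ partitionCount t := by
  set big := {l ∈ withoutOnes t | m ≤ l.parts.toFinset.card}
  calc m * #big = ∑ _l ∈ big, m := by rw [sum_const, smul_eq_mul, mul_comm]
    _ ≤ ∑ l ∈ big, l.parts.toFinset.card := sum_le_sum fun l hl => (mem_filter.1 hl).2
    _ = #(big.sigma fun l => l.parts.toFinset) := (card_sigma _ _).symm
    _ ≤ #(univ : Finset t.Partition) := card_le_card_of_injOn _
          (fun _ _ => mem_coe.2 (mem_univ _))
          (shatter_injOn fun l hl => (mem_filter.1 (mem_filter.1 hl).1).2)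
    _ = partitionCount t := rfl

lemma card_filter_toFinset_card_lt_le (t m : ℕ) :
    #{l : t.Partition | l.parts.toFinset.card < m} ≤ m * (t + 1) ^ (2 * m) := by
  set grid := range (t + 1) ×ˢ range (t + 1)
  calc #{l : t.Partition | l.parts.toFinset.card < m}
      ≤ #((range m).biUnion fun d => powersetCard d grid) := by
        refine card_le_card_of_injOn (fun l => (Multiset.toFinsupp l.parts).graph)
          (fun l hl => ?_) fun l _ l' _ h => Nat.Partition.ext
            (Multiset.toFinsupp.injective (Finsupp.graph_injective _ _ h))
        have hcard : #(Multiset.toFinsupp l.parts).graph = l.parts.toFinset.card := by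
          rw [Finsupp.graph, card_map, Multiset.toFinsupp_support]
        simp only [coe_filter, mem_univ, true_and] at hl
        simp only [coe_biUnion, coe_range, Set.mem_iUnion, Set.mem_Iio, mem_coe, mem_powersetCard]
        refine ⟨_, hcard ▸ hl, fun p hp => ?_, rfl⟩
        obtain ⟨hcount, hne⟩ := Finsupp.mem_graph_iff.1 hp
        rw [Multiset.toFinsupp_apply] at hcount
        have hmem : p.1 ∈ l.parts := Multiset.count_pos.1 (by omega)
        have h1 : p.1 ≤ t := Nat.Partition.le_of_mem_parts hmem
        have h2 : p.2 ≤ t := hcount ▸ (Multiset.count_le_card _ _).trans (card_parts_le l)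
        simp only [grid, mem_product, mem_range]
        omega
    _ ≤ ∑ d ∈ range m, #(powersetCard d grid) := card_biUnion_le
    _ ≤ ∑ _d ∈ range m, (t + 1) ^ (2 * m) := sum_le_sum fun d hd => by
        rw [card_powersetCard, card_product, card_range, ← sq, mul_comm 2 m, pow_mul']
        exact (Nat.choose_le_pow _ _).trans
          (Nat.pow_le_pow_right (by positivity) (mem_range.1 hd).le)
    _ = m * (t + 1) ^ (2 * m) := by simp

lemma mul_card_withoutOnes_le (t m : ℕ) :
    m * #(withoutOnes t) ≤ partitionCount t + m * (m * (t + 1) ^ (2 * m)) := by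
  have hsmall : #{l ∈ withoutOnes t | ¬m ≤ l.parts.toFinset.card} ≤ m * (t + 1) ^ (2 * m) :=
    (card_le_card fun l hl => mem_filter.2 ⟨mem_univ _, not_le.1 (mem_filter.1 hl).2⟩).trans
      (card_filter_toFinset_card_lt_le t m)
  rw [← card_filter_add_card_filter_not (s := withoutOnes t)
    (fun l => m ≤ l.parts.toFinset.card), mul_add]
  exact add_le_add (mul_card_filter_withoutOnes_le t m) (Nat.mul_le_mul_left m hsmall)

lemma isLittleO_pow_partitionCount (k : ℕ) :
    (fun t : ℕ => ((t : ℝ) + 1) ^ k) =o[atTop] fun t => (partitionCount t : ℝ) := by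
  set c := (k + 3) ^ 2
  have hc : 0 < c := by positivity
  have hbigO : (fun t : ℕ => ((t : ℝ) + 1) ^ (k + 1)) =O[atTop]
      fun t => (partitionCount t : ℝ) := by
    refine IsBigO.of_bound (((2 * c : ℕ) : ℝ) ^ (k + 1)) ?_
    filter_upwards [eventually_ge_atTop c] with t ht
    have hdiv : t + 1 ≤ 2 * c * (t / c) := by
      have := Nat.lt_div_mul_add (a := t) hc
      have := (Nat.le_div_iff_mul_le hc).2 (by omega : 1 * c ≤ t)
      nlinarith
    have hP := pow_le_partitionCount (k := k + 1) (Nat.div_mul_le_self t c)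
    simp only [norm_pow, Real.norm_eq_abs, Nat.abs_cast,
      abs_of_nonneg (by positivity : (0 : ℝ) ≤ t + 1)]
    exact_mod_cast (Nat.pow_le_pow_left hdiv _).trans
      (by rw [mul_pow]; exact Nat.mul_le_mul_left _ hP)
  have hlittle : (fun t : ℕ => ((t : ℝ) + 1) ^ k) =o[atTop] fun t => ((t : ℝ) + 1) ^ (k + 1) :=
    (isLittleO_pow_pow_atTop_of_lt k.lt_succ_self).comp_tendsto
      (tendsto_atTop_add_const_right _ 1 tendsto_natCast_atTop_atTop)
  exact hlittle.trans_isBigO hbigO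

lemma isLittleO_card_withoutOnes :
    (fun t => (#(withoutOnes t) : ℝ)) =o[atTop] fun t => (partitionCount t : ℝ) := by
  refine IsLittleO.of_bound fun ε hε => ?_
  obtain ⟨m, hm⟩ := exists_nat_gt (2 / ε)
  have hmpos : (0 : ℝ) < m := (div_pos two_pos hε).trans hm
  filter_upwards
    [(isLittleO_pow_partitionCount (2 * m)).bound (div_pos hε (mul_pos two_pos hmpos))] with t ht
  simp only [norm_pow, Real.norm_eq_abs, Nat.abs_cast,
    abs_of_nonneg (by positivity : (0 : ℝ) ≤ t + 1)] at ht ⊢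
  have hbound : (m : ℝ) * #(withoutOnes t) ≤ partitionCount t + m * (m * (t + 1) ^ (2 * m)) :=
    mod_cast mul_card_withoutOnes_le t m
  rw [div_lt_iff₀ hε] at hm
  have hP : (0 : ℝ) ≤ partitionCount t := Nat.cast_nonneg _
  rw [div_mul_eq_mul_div, le_div_iff₀ (mul_pos two_pos hmpos)] at ht
  -- `m Q ≤ P + m² (t + 1) ^ (2m) ≤ P + (m ε / 2) P ≤ m ε P`, as `m ε > 2`
  refine le_of_mul_le_mul_left ?_ hmpos
  nlinarith [mul_le_mul_of_nonneg_left ht (by positivity : (0 : ℝ) ≤ m / 2),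
    mul_le_mul_of_nonneg_right hm.le hP]

theorem tendsto_partitionCount_succ_div :
    Tendsto (fun n => (partitionCount (n + 1) : ℝ) / partitionCount n) atTop (𝓝 1) := by
  have hP : ∀ n, (0 : ℝ) < partitionCount n := fun n => Nat.cast_pos.2 (partitionCount_pos n)
  have hQ := (tendsto_add_atTop_iff_nat 1).2 isLittleO_card_withoutOnes.tendsto_div_nhds_zero
  have hinv :
      Tendsto (fun n => (partitionCount n : ℝ) / partitionCount (n + 1)) atTop (𝓝 1) := by
    have hlim := (tendsto_const_nhds (x := (1 : ℝ))).sub hQ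
    rw [sub_zero] at hlim
    refine hlim.congr fun n => ?_
    rw [eq_div_iff (hP _).ne', sub_mul, div_mul_cancel₀ _ (hP _).ne', partitionCount_succ]
    push_cast
    ring
  simpa using hinv.inv₀ one_ne_zero

lemma slowlyGrowing_partitionCount : SlowlyGrowing fun n => (partitionCount n : ℝ) where
  monotone := fun _ _ h => Nat.cast_le.2 (partitionCount_mono h)
  pos_zero := by simp [partitionCount_zero]
  tendsto_succ_div := tendsto_partitionCount_succ_div

lemma sum_antidiagonalTuple_succ_prod {R : Type*} [CommSemiring R] (f : ℕ → R) (k n : ℕ) :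
    ∑ x ∈ Finset.Nat.antidiagonalTuple (k + 1) n, ∏ i, f (x i) =
      ∑ p ∈ antidiagonal n, f p.1 * ∑ x ∈ Finset.Nat.antidiagonalTuple k p.2, ∏ i, f (x i) := by
  have h : ∀ k m, Finset.Nat.antidiagonalTuple k m = finAntidiagonal k m := fun k m => by
    ext; simp [Finset.Nat.mem_antidiagonalTuple]
  simp only [h]
  rw [finAntidiagonal, finAntidiagonal.aux, sum_disjiUnion]
  simp [Fin.prod_univ_succ, mul_sum, finAntidiagonal]

lemma Vpart_one : Vpart 1 = partitionCount := by
  ext n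
  simp [Vpart, Finset.Nat.antidiagonalTuple_one]

lemma Vpart_succ_eq_cauchyProduct (r : ℕ) :
    (fun n => (Vpart (r + 1) n : ℝ)) =
      cauchyProduct (fun n => (partitionCount n : ℝ)) fun n => (Vpart r n : ℝ) := by
  ext n
  simp only [Vpart, sum_antidiagonalTuple_succ_prod, cauchyProduct]
  push_cast
  rfl

lemma slowlyGrowing_Vpart {r : ℕ} (hr : 1 ≤ r) : SlowlyGrowing fun n => (Vpart r n : ℝ) := by
  induction r, hr using Nat.le_induction with
  | base => simpa [Vpart_one] using slowlyGrowing_partitionCount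
  | succ r _ ih =>
    rw [Vpart_succ_eq_cauchyProduct]
    exact slowlyGrowing_cauchyProduct slowlyGrowing_partitionCount ih

theorem stmt18 (r : ℕ) (hr : 1 ≤ r) :
    Filter.Tendsto (fun n : ℕ => (Vpart r n : ℝ) / (Vpart r (n - 1) : ℝ))
      Filter.atTop (nhds 1) := by
  rw [← tendsto_add_atTop_iff_nat 1]
  simpa using (slowlyGrowing_Vpart hr).tendsto_succ_div
end
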